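/- arXiv:1606.04933 — 2 statements merged into one kernel-verified Lean document; each statement's English description precedes it below -/
import Mathlib

section
/- With the same setup (h = α₁ h₀ + h̃, x = α₂ x₀ + x̃, ‖h₀‖ = ‖x₀‖ = √d₀, δ = ‖h x* − h₀ x₀*‖_F/d₀ < 1), the product of perturbation norms satisfies ‖h̃‖ · ‖x̃‖ ≤ δ²/(2(1−δ)) · d₀. -/
open scoped BigOperators

noncomputable def frob {K N : ℕ} (M : Matrix (Fin K) (Fin N) ℂ) : ℝ :=
  Real.sqrt (∑ i, ∑ j, ‖M i j‖ ^ 2)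

noncomputable def outer {K N : ℕ} (h : EuclideanSpace ℂ (Fin K))
    (x : EuclideanSpace ℂ (Fin N)) : Matrix (Fin K) (Fin N) ℂ :=
  Matrix.of fun i j => h i * star (x j)

/-!
With h̃ = h - α₁ • h₀ ⟂ h₀ and x̃ = x - α₂ • x₀ ⟂ x₀, expanding the Frobenius norm gives
δ² d₀² = |α₁ ᾱ₂ - 1|² d₀² + |α₂|² ‖h̃‖² d₀ + |α₁|² ‖x̃‖² d₀ + ‖h̃‖² ‖x̃‖².
The first term forces |α₁| |α₂| ≥ 1 - δ, the middle two give |α₂|² ‖h̃‖² + |α₁|² ‖x̃‖² ≤ δ² d₀,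
and AM–GM turns this into 2 (1 - δ) ‖h̃‖ ‖x̃‖ ≤ δ² d₀.
-/

open Finset ComplexConjugate

theorem norm_sq_eq_norm_sq_smul_add_norm_sq_sub {𝕜 E : Type*} [RCLike 𝕜]
    [NormedAddCommGroup E] [InnerProductSpace 𝕜 E] {u v : E} {α : 𝕜}
    (hα : inner 𝕜 u v = α * ‖u‖ ^ 2) :
    ‖v‖ ^ 2 = ‖α‖ ^ 2 * ‖u‖ ^ 2 + ‖v - α • u‖ ^ 2 := by
  have horth : inner 𝕜 (α • u) (v - α • u) = 0 := by
    rw [inner_sub_right, inner_smul_left, inner_smul_left, inner_smul_right, hα,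
      inner_self_eq_norm_sq_to_K]
    ring
  have := norm_add_sq_eq_norm_sq_add_norm_sq_of_inner_eq_zero _ _ horth
  rw [add_sub_cancel, norm_smul] at this
  linear_combination this

theorem frob_sq_outer_sub_outer {K N : ℕ} (h h₀ : EuclideanSpace ℂ (Fin K))
    (x x₀ : EuclideanSpace ℂ (Fin N)) :
    frob (outer h x - outer h₀ x₀) ^ 2
      = ‖h‖ ^ 2 * ‖x‖ ^ 2 + ‖h₀‖ ^ 2 * ‖x₀‖ ^ 2
        - 2 * (inner ℂ h₀ h * conj (inner ℂ x₀ x)).re := by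
  have hcross : inner ℂ h₀ h * conj (inner ℂ x₀ x)
      = ∑ i, ∑ j, h i * conj (x j) * conj (h₀ i * conj (x₀ j)) := by
    rw [inner_conj_symm, PiLp.inner_apply, PiLp.inner_apply, sum_mul_sum]
    refine sum_congr rfl fun i _ => sum_congr rfl fun j _ => ?_
    simp only [RCLike.inner_apply, map_mul, Complex.conj_conj]
    ring
  rw [frob, Real.sq_sqrt (by positivity), EuclideanSpace.norm_sq_eq h, EuclideanSpace.norm_sq_eq x,
    EuclideanSpace.norm_sq_eq h₀, EuclideanSpace.norm_sq_eq x₀, sum_mul_sum, sum_mul_sum, hcross,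
    Complex.re_sum, mul_sum, ← sum_add_distrib, ← sum_sub_distrib]
  refine sum_congr rfl fun i _ => ?_
  rw [Complex.re_sum, mul_sum, ← sum_add_distrib, ← sum_sub_distrib]
  refine sum_congr rfl fun j _ => ?_
  simp only [outer, Matrix.sub_apply, Matrix.of_apply, Complex.star_def, Complex.sq_norm,
    Complex.normSq_sub, Complex.normSq_mul, Complex.normSq_conj]

theorem frob_sq_outer_sub_outer_eq_of_inner_eq {K N : ℕ} {d : ℝ}
    {h h₀ : EuclideanSpace ℂ (Fin K)} {x x₀ : EuclideanSpace ℂ (Fin N)} {α₁ α₂ : ℂ}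
    (hh₀ : ‖h₀‖ ^ 2 = d) (hx₀ : ‖x₀‖ ^ 2 = d)
    (hα₁ : inner ℂ h₀ h = α₁ * d) (hα₂ : inner ℂ x₀ x = α₂ * d) :
    frob (outer h x - outer h₀ x₀) ^ 2
      = ‖α₁ * conj α₂ - 1‖ ^ 2 * d ^ 2 + ‖α₂‖ ^ 2 * ‖h - α₁ • h₀‖ ^ 2 * d
        + ‖α₁‖ ^ 2 * ‖x - α₂ • x₀‖ ^ 2 * d + ‖h - α₁ • h₀‖ ^ 2 * ‖x - α₂ • x₀‖ ^ 2 := by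
  have ph := norm_sq_eq_norm_sq_smul_add_norm_sq_sub (by rw [hα₁, ← hh₀]; push_cast; rfl)
  have px := norm_sq_eq_norm_sq_smul_add_norm_sq_sub (by rw [hα₂, ← hx₀]; push_cast; rfl)
  have hre : (α₁ * d * conj (α₂ * d)).re = d ^ 2 * (α₁ * conj α₂).re := by
    rw [map_mul, Complex.conj_ofReal, ← Complex.re_ofReal_mul]
    push_cast
    ring_nf
  have hsub : ‖α₁ * conj α₂ - 1‖ ^ 2 = ‖α₁‖ ^ 2 * ‖α₂‖ ^ 2 + 1 - 2 * (α₁ * conj α₂).re := by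
    simp only [Complex.sq_norm, Complex.normSq_sub, Complex.normSq_mul, Complex.normSq_conj,
      map_one, mul_one]
  rw [frob_sq_outer_sub_outer, ph, px, hα₁, hα₂, hh₀, hx₀, hre, hsub]
  ring

theorem mul_le_sq_div_of_sq_mul_sq_eq {a b c d δ H X : ℝ} (hd : 0 < d) (hδ₀ : 0 ≤ δ)
    (hδ₁ : δ < 1) (hH : 0 ≤ H) (hX : 0 ≤ X) (habc : 1 - c ≤ a * b)
    (hid : δ ^ 2 * d ^ 2
      = c ^ 2 * d ^ 2 + b ^ 2 * H ^ 2 * d + a ^ 2 * X ^ 2 * d + H ^ 2 * X ^ 2) :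
    H * X ≤ δ ^ 2 / (2 * (1 - δ)) * d := by
  have hcδ : c ≤ δ := by
    have : c ^ 2 ≤ δ ^ 2 := by
      refine le_of_mul_le_mul_right ?_ (by positivity : 0 < d ^ 2)
      nlinarith [sq_nonneg (H * X), sq_nonneg (b * H), sq_nonneg (a * X)]
    exact (abs_le_of_sq_le_sq' this hδ₀).2
  have hweighted : b ^ 2 * H ^ 2 + a ^ 2 * X ^ 2 ≤ δ ^ 2 * d := by
    refine le_of_mul_le_mul_right ?_ hd
    nlinarith [sq_nonneg (H * X), sq_nonneg (c * d)]
  have hamgm : 2 * (a * b) * (H * X) ≤ b ^ 2 * H ^ 2 + a ^ 2 * X ^ 2 := by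
    nlinarith [two_mul_le_add_sq (b * H) (a * X)]
  have hlower : 2 * (1 - δ) * (H * X) ≤ 2 * (a * b) * (H * X) := by
    gcongr
    linarith
  rw [div_mul_eq_mul_div, le_div_iff₀ (by linarith)]
  linarith

theorem stmt2 {K N : ℕ} (d₀ : ℝ) (hd₀ : 0 < d₀)
    (h₀ h : EuclideanSpace ℂ (Fin K)) (x₀ x : EuclideanSpace ℂ (Fin N))
    (hh₀ : ‖h₀‖ = Real.sqrt d₀) (hx₀ : ‖x₀‖ = Real.sqrt d₀)
    (α₁ α₂ : ℂ) (hα₁ : α₁ = (inner ℂ h₀ h : ℂ) / (d₀ : ℂ))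
    (hα₂ : α₂ = (inner ℂ x₀ x : ℂ) / (d₀ : ℂ))
    (δ : ℝ) (hδ : δ = frob (outer h x - outer h₀ x₀) / d₀)
    (hδ1 : δ < 1) :
    ‖h - α₁ • h₀‖ * ‖x - α₂ • x₀‖ ≤ δ ^ 2 / (2 * (1 - δ)) * d₀ := by
  have hd₀ℂ : (d₀ : ℂ) ≠ 0 := by exact_mod_cast hd₀.ne'
  have hδ₀ : 0 ≤ δ := hδ ▸ div_nonneg (Real.sqrt_nonneg _) hd₀.le
  have hid := frob_sq_outer_sub_outer_eq_of_inner_eq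
    (by rw [hh₀, Real.sq_sqrt hd₀.le]) (by rw [hx₀, Real.sq_sqrt hd₀.le])
    ((eq_div_iff hd₀ℂ).1 hα₁).symm ((eq_div_iff hd₀ℂ).1 hα₂).symm
  rw [show frob (outer h x - outer h₀ x₀) = δ * d₀ by rw [hδ, div_mul_cancel₀ _ hd₀.ne'],
    mul_pow] at hid
  have habc : 1 - ‖α₁ * conj α₂ - 1‖ ≤ ‖α₁‖ * ‖α₂‖ := by
    have := norm_sub_norm_le (1 : ℂ) (1 - α₁ * conj α₂)
    rwa [norm_one, sub_sub_cancel, norm_mul, Complex.norm_conj, norm_sub_rev] at this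
  exact mul_le_sq_div_of_sq_mul_sq_eq hd₀ hδ₀ hδ1 (norm_nonneg _) (norm_nonneg _) habc hid
end

section
/- Let d₀ > 0 and d, ρ real with (9/10) d₀ ≤ d ≤ (11/10) d₀ and ρ ≥ d². Suppose (h, x) ∈ ℂ^K × ℂ^N is such that at least one of the quantities ‖h‖²/(2d), ‖x‖²/(2d), or L|b_l* h|²/(8dμ²) (for some l) exceeds 2d₀/d. Then with G(h,x) := ρ[G₀(‖h‖²/(2d)) + G₀(‖x‖²/(2d)) + Σ_{l=1}^L G₀(L|b_l*h|²/(8dμ²))] and G₀(z) = max{z−1,0}², one has G(h, x) ≥ ρ (2d₀/d − 1)² ≥ (2d₀ − d)² ≥ 0.81 d₀². -/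
open scoped BigOperators

/-- The paper's `G₀`. -/
noncomputable def penalty (z : ℝ) : ℝ := max (z - 1) 0 ^ 2

lemma penalty_nonneg (z : ℝ) : 0 ≤ penalty z := sq_nonneg _

lemma penalty_of_one_le {z : ℝ} (hz : 1 ≤ z) : penalty z = (z - 1) ^ 2 := by
  rw [penalty, max_eq_left (sub_nonneg.mpr hz)]

lemma penalty_mono : Monotone penalty := fun _ _ hzw =>
  pow_le_pow_left₀ (le_max_right _ _) (max_le_max_right 0 (sub_le_sub_right hzw 1)) 2

lemma sq_sub_one_le_penalty {c z : ℝ} (hc : 1 ≤ c) (hcz : c ≤ z) : (c - 1) ^ 2 ≤ penalty z :=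
  penalty_of_one_le hc ▸ penalty_mono hcz

lemma le_add_add_sum_of_le_some {ι : Type*} [Fintype ι] {g : ℝ → ℝ} (hg : ∀ z, 0 ≤ g z)
    {c a b : ℝ} {f : ι → ℝ} (h : c ≤ g a ∨ c ≤ g b ∨ ∃ i, c ≤ g (f i)) :
    c ≤ g a + g b + ∑ i, g (f i) := by
  have hsum : 0 ≤ ∑ i, g (f i) := Finset.sum_nonneg fun i _ => hg _
  rcases h with ha | hb | ⟨i, hi⟩
  · linarith [hg b]
  · linarith [hg a]
  · linarith [hg a, hg b, Finset.single_le_sum (fun j _ => hg (f j)) (Finset.mem_univ i)]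

lemma sq_sub_le_mul_div_sub_one_sq {a d ρ : ℝ} (hd : 0 < d) (hρ : d ^ 2 ≤ ρ) :
    (a - d) ^ 2 ≤ ρ * (a / d - 1) ^ 2 := calc
  (a - d) ^ 2 = d ^ 2 * (a / d - 1) ^ 2 := by field_simp
  _ ≤ ρ * (a / d - 1) ^ 2 := mul_le_mul_of_nonneg_right hρ (sq_nonneg _)

theorem stmt8_general {K N L : ℕ} (d₀ d ρ μ : ℝ) (hd₀ : 0 < d₀)
    (hdl : 9 / 10 * d₀ ≤ d) (hdu : d ≤ 11 / 10 * d₀) (hρ : d ^ 2 ≤ ρ)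
    (b : Fin L → EuclideanSpace ℂ (Fin K))
    (h : EuclideanSpace ℂ (Fin K)) (x : EuclideanSpace ℂ (Fin N))
    (hexc : ‖h‖ ^ 2 / (2 * d) > 2 * d₀ / d ∨ ‖x‖ ^ 2 / (2 * d) > 2 * d₀ / d ∨
      ∃ l, (L : ℝ) * ‖(inner ℂ (b l) h : ℂ)‖ ^ 2 / (8 * d * μ ^ 2) > 2 * d₀ / d) :
    ρ * (max (‖h‖ ^ 2 / (2 * d) - 1) 0 ^ 2 + max (‖x‖ ^ 2 / (2 * d) - 1) 0 ^ 2
        + ∑ l, max ((L : ℝ) * ‖(inner ℂ (b l) h : ℂ)‖ ^ 2 / (8 * d * μ ^ 2) - 1) 0 ^ 2)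
      ≥ ρ * (2 * d₀ / d - 1) ^ 2 ∧
    ρ * (2 * d₀ / d - 1) ^ 2 ≥ (2 * d₀ - d) ^ 2 ∧
    (2 * d₀ - d) ^ 2 ≥ 0.81 * d₀ ^ 2 := by
  have hd : 0 < d := by linarith
  have hc : 1 ≤ 2 * d₀ / d := by rw [le_div_iff₀ hd]; linarith
  have hsum : (2 * d₀ / d - 1) ^ 2 ≤ penalty (‖h‖ ^ 2 / (2 * d)) + penalty (‖x‖ ^ 2 / (2 * d))
      + ∑ l, penalty ((L : ℝ) * ‖(inner ℂ (b l) h : ℂ)‖ ^ 2 / (8 * d * μ ^ 2)) := by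
    refine le_add_add_sum_of_le_some penalty_nonneg <| hexc.imp (fun hz => sq_sub_one_le_penalty hc hz.le)
      (Or.imp (fun hz => sq_sub_one_le_penalty hc hz.le)
        (Exists.imp fun _ hz => sq_sub_one_le_penalty hc hz.le))
  refine ⟨mul_le_mul_of_nonneg_left hsum (by nlinarith), sq_sub_le_mul_div_sub_one_sq hd hρ, ?_⟩
  nlinarith

theorem stmt8 {K N L : ℕ} (d₀ d ρ μ : ℝ) (hd₀ : 0 < d₀)
    (hdl : 9 / 10 * d₀ ≤ d) (hdu : d ≤ 11 / 10 * d₀) (hρ : d ^ 2 ≤ ρ) (hμ : 0 < μ)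
    (b : Fin L → EuclideanSpace ℂ (Fin K))
    (h : EuclideanSpace ℂ (Fin K)) (x : EuclideanSpace ℂ (Fin N))
    (hexc : ‖h‖ ^ 2 / (2 * d) > 2 * d₀ / d ∨ ‖x‖ ^ 2 / (2 * d) > 2 * d₀ / d ∨
      ∃ l, (L : ℝ) * ‖(inner ℂ (b l) h : ℂ)‖ ^ 2 / (8 * d * μ ^ 2) > 2 * d₀ / d) :
    ρ * (max (‖h‖ ^ 2 / (2 * d) - 1) 0 ^ 2 + max (‖x‖ ^ 2 / (2 * d) - 1) 0 ^ 2
        + ∑ l, max ((L : ℝ) * ‖(inner ℂ (b l) h : ℂ)‖ ^ 2 / (8 * d * μ ^ 2) - 1) 0 ^ 2)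
      ≥ ρ * (2 * d₀ / d - 1) ^ 2 ∧
    ρ * (2 * d₀ / d - 1) ^ 2 ≥ (2 * d₀ - d) ^ 2 ∧
    (2 * d₀ - d) ^ 2 ≥ 0.81 * d₀ ^ 2 :=
  stmt8_general d₀ d ρ μ hd₀ hdl hdu hρ b h x hexc
end
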